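/- arXiv:0903.3525 — 5 statements merged into one kernel-verified Lean document; each statement's English description precedes it below -/
import Mathlib

section
/- Let a, δ, ε, ξ be real numbers with a > 0, δ ≥ 0, ε ≥ 0, 0 ≤ ξ ≤ ε, and δ + ε/a ≤ 0.277. Then a - ξ > 0, the quantity (a·δ + ε - ξ)/(a - ξ) lies in [0, 1/2], and (a - ξ)·(1 - h((a·δ + ε - ξ)/(a - ξ))) ≥ a·(1 - h(δ + ε/a)). -/
/-- Binary Shannon entropy to base 2: `h(p) = -p·log₂ p - (1-p)·log₂(1-p)`,
with the convention `log₂ 0 = 0`, so that `h 0 = h 1 = 0`. -/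
noncomputable def binEnt (p : ℝ) : ℝ := -p * Real.logb 2 p - (1 - p) * Real.logb 2 (1 - p)

/-!
Write `M = a δ + ε` for the leaked weight and `d = a - M`. Then `δ + ε / a = M / (M + d)` and
`(a δ + ε - ξ) / (a - ξ) = m / (m + d)` with `m = M - ξ`, so the claim is that
`g m = (m + d) (1 - h (m / (m + d)))` does not decrease when `m` drops from `M` to `M - ξ`.
In natural logarithms `g m · log 2` is, up to a constant, `m log 2 + m log m - (m + d) log (m + d)`,
whose derivative `log (2 m / (m + d))` is nonpositive as long as `m ≤ d`, i.e. as long as the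
error rate `m / (m + d)` stays below `1 / 2`.
-/

open Real Set

lemma binEnt_eq_binEntropy_div_log_two (p : ℝ) : binEnt p = binEntropy p / log 2 := by
  simp only [binEnt, binEntropy_eq_negMulLog_add_negMulLog_one_sub, negMulLog, logb]
  ring

lemma mul_binEntropy_div_add (x y : ℝ) :
    (x + y) * binEntropy (x / (x + y)) = negMulLog x + negMulLog y - negMulLog (x + y) := by
  rcases eq_or_ne (x + y) 0 with hxy | hxy
  · obtain rfl : y = -x := by linarith
    simp [negMulLog, log_neg_eq_log]
  set p := x / (x + y)
  have hx : p * (x + y) = x := div_mul_cancel₀ x hxy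
  have hy : (1 - p) * (x + y) = y := by rw [sub_mul, hx]; ring
  calc (x + y) * binEntropy p = (x + y) * (negMulLog p + negMulLog (1 - p)) := by
        rw [binEntropy_eq_negMulLog_add_negMulLog_one_sub]
    _ = negMulLog (p * (x + y)) + negMulLog ((1 - p) * (x + y)) - negMulLog (x + y) := by
        rw [negMulLog_mul, negMulLog_mul]; ring
    _ = negMulLog x + negMulLog y - negMulLog (x + y) := by rw [hx, hy]

lemma antitoneOn_mul_log_two_sub_negMulLog_add_negMulLog_add (d : ℝ) :
    AntitoneOn (fun m ↦ m * log 2 - negMulLog m + negMulLog (m + d)) (Icc 0 d) := by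
  refine antitoneOn_of_hasDerivWithinAt_nonpos (convex_Icc 0 d) (by fun_prop)
    (f' := fun m ↦ log 2 + log m - log (m + d)) (fun m hm ↦ ?_) (fun m hm ↦ ?_)
  all_goals rw [interior_Icc] at hm; obtain ⟨hm0, hmd⟩ := hm
  · have h : HasDerivAt (fun m ↦ m * log 2 - negMulLog m + negMulLog (m + d))
        (log 2 - (-log m - 1) + (-log (m + d) - 1)) m :=
      ((hasDerivAt_mul_const (log 2)).sub (hasDerivAt_negMulLog hm0.ne')).add
        ((hasDerivAt_negMulLog (by linarith)).comp_add_const m d)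
    exact (h.congr_deriv (by ring)).hasDerivWithinAt
  · rw [← log_mul two_ne_zero hm0.ne', sub_nonpos]
    exact log_le_log (by positivity) (by linarith)

lemma antitoneOn_mul_one_sub_binEnt_div_add (d : ℝ) :
    AntitoneOn (fun m ↦ (m + d) * (1 - binEnt (m / (m + d)))) (Icc 0 d) := by
  intro m hm M hM hmM
  have hscaled : ∀ x, (x + d) * (1 - binEnt (x / (x + d))) * log 2 =
      (x * log 2 - negMulLog x + negMulLog (x + d)) + (d * log 2 - negMulLog d) := by
    intro x
    rw [binEnt_eq_binEntropy_div_log_two]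
    field_simp
    rw [mul_sub, mul_binEntropy_div_add]
    ring
  refine le_of_mul_le_mul_right ?_ (log_pos one_lt_two)
  simp only [hscaled m, hscaled M]
  linarith [antitoneOn_mul_log_two_sub_negMulLog_add_negMulLog_add d hm hM hmM]

theorem leakage_entropy_bound_general (a δ ε ξ : ℝ)
    (ha : 0 < a) (hδ : 0 ≤ δ) (hξ0 : 0 ≤ ξ) (hξε : ξ ≤ ε)
    (hbound : δ + ε / a ≤ 0.277) :
    0 < a - ξ ∧
    0 ≤ (a * δ + ε - ξ) / (a - ξ) ∧
    (a * δ + ε - ξ) / (a - ξ) ≤ 1 / 2 ∧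
    (a - ξ) * (1 - binEnt ((a * δ + ε - ξ) / (a - ξ))) ≥ a * (1 - binEnt (δ + ε / a)) := by
  have haδ : 0 ≤ a * δ := mul_nonneg ha.le hδ
  have hleak : a * δ + ε ≤ 0.277 * a := by
    have := mul_le_mul_of_nonneg_left hbound ha.le
    rw [mul_add, mul_div_cancel₀ ε ha.ne'] at this
    linarith
  have hpos : 0 < a - ξ := by linarith
  refine ⟨hpos, div_nonneg (by linarith) hpos.le, (div_le_iff₀ hpos).2 (by linarith), ?_⟩
  have key := antitoneOn_mul_one_sub_binEnt_div_add (a - (a * δ + ε))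
    ⟨by linarith, by linarith⟩ ⟨by linarith, by linarith⟩ (by linarith : a * δ + ε - ξ ≤ a * δ + ε)
  have hden : a * δ + ε - ξ + (a - (a * δ + ε)) = a - ξ := by ring
  have hrate : (a * δ + ε) / a = δ + ε / a := by field_simp
  simpa only [hden, add_sub_cancel, hrate] using key

theorem leakage_entropy_bound (a δ ε ξ : ℝ)
    (ha : 0 < a) (hδ : 0 ≤ δ) (hε : 0 ≤ ε) (hξ0 : 0 ≤ ξ) (hξε : ξ ≤ ε)
    (hbound : δ + ε / a ≤ 0.277) :
    0 < a - ξ ∧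
    0 ≤ (a * δ + ε - ξ) / (a - ξ) ∧
    (a * δ + ε - ξ) / (a - ξ) ≤ 1 / 2 ∧
    (a - ξ) * (1 - binEnt ((a * δ + ε - ξ) / (a - ξ))) ≥ a * (1 - binEnt (δ + ε / a)) :=
  leakage_entropy_bound_general a δ ε ξ ha hδ hξ0 hξε hbound
end

section
/- Let J be a finite index set, and let p_j ≥ 0 (j ∈ J) with ∑_j p_j = 1, and let α_j, β_j ∈ [0,1] satisfy (1 - 2α_j)² + (1 - 2β_j)² ≤ 1 for every j ∈ J. Then 1 - 2·∑_j p_j·α_j ≤ ∑_j 2·p_j·√(β_j·(1 - β_j)). -/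
/-!
Since `(1 - 2β)² = 1 - 4β(1 - β)`, the complementarity bound says `(1 - 2α_j)² ≤ 4β_j(1 - β_j)`,
i.e. `1 - 2α_j ≤ 2√(β_j(1 - β_j))` for each `j`; averaging with the weights `p_j` gives the estimate.
-/

open Finset

lemma one_sub_two_mul_le_two_mul_sqrt {a b : ℝ} (h : (1 - 2 * a) ^ 2 + (1 - 2 * b) ^ 2 ≤ 1) :
    1 - 2 * a ≤ 2 * √(b * (1 - b)) := by
  have hsq : (1 - 2 * a) ^ 2 ≤ 2 ^ 2 * (b * (1 - b)) := by linarith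
  calc 1 - 2 * a ≤ |1 - 2 * a| := le_abs_self _
    _ ≤ √(2 ^ 2 * (b * (1 - b))) := Real.abs_le_sqrt hsq
    _ = 2 * √(b * (1 - b)) := by rw [Real.sqrt_mul (by positivity), Real.sqrt_sq zero_le_two]

lemma sum_mul_sub_of_sum_eq_one {J : Type*} [Fintype J] {p : J → ℝ} (hp : ∑ j, p j = 1)
    (c : ℝ) (f : J → ℝ) : ∑ j, p j * (c - f j) = c - ∑ j, p j * f j := by
  simp only [mul_sub, sum_sub_distrib, ← sum_mul, hp, one_mul]

theorem statistical_estimate_general {J : Type*} [Fintype J] (p α β : J → ℝ)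
    (hp : ∀ j, 0 ≤ p j) (hpsum : ∑ j, p j = 1)
    (hcompl : ∀ j, (1 - 2 * α j) ^ 2 + (1 - 2 * β j) ^ 2 ≤ 1) :
    1 - 2 * ∑ j, p j * α j ≤ ∑ j, 2 * p j * Real.sqrt (β j * (1 - β j)) := by
  calc 1 - 2 * ∑ j, p j * α j = ∑ j, p j * (1 - 2 * α j) := by
        rw [sum_mul_sub_of_sum_eq_one hpsum, mul_sum]
        simp only [mul_left_comm]
    _ ≤ ∑ j, p j * (2 * √(β j * (1 - β j))) :=
        sum_le_sum fun j _ =>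
          mul_le_mul_of_nonneg_left (one_sub_two_mul_le_two_mul_sqrt (hcompl j)) (hp j)
    _ = ∑ j, 2 * p j * √(β j * (1 - β j)) := by simp only [mul_left_comm, mul_assoc]

theorem statistical_estimate {J : Type*} [Fintype J] (p α β : J → ℝ)
    (hp : ∀ j, 0 ≤ p j) (hpsum : ∑ j, p j = 1)
    (hα0 : ∀ j, 0 ≤ α j) (hα1 : ∀ j, α j ≤ 1)
    (hβ0 : ∀ j, 0 ≤ β j) (hβ1 : ∀ j, β j ≤ 1)
    (hcompl : ∀ j, (1 - 2 * α j) ^ 2 + (1 - 2 * β j) ^ 2 ≤ 1) :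
    1 - 2 * ∑ j, p j * α j ≤ ∑ j, 2 * p j * Real.sqrt (β j * (1 - β j)) :=
  statistical_estimate_general p α β hp hpsum hcompl
end

section
/- Let q_X, δ_X, q_ph, δ_ph ∈ [0,1] and Δ ∈ ℝ. Suppose there are nonnegative reals p_0, p_1, p_2 and reals α_j, β_j ∈ [0,1] (j = 0,1,2) such that: ∑_j p_j·α_j = Δ; (1-2α_j)² + (1-2β_j)² ≤ 1 for each j; 2p_0·β_0 = q_ph·(1-δ_ph), 2p_1·β_1 = q_ph·δ_ph, 2p_2·β_2 = 1-q_ph; and 2p_0·(1-β_0) = q_X·(1-δ_X), 2p_1·(1-β_1) = q_X·δ_X, 2p_2·(1-β_2) = 1-q_X. Then 1 - 2Δ ≤ √(q_X·(1-δ_X)·q_ph·(1-δ_ph)) + √(q_X·δ_X·q_ph·δ_ph) + √((1-q_X)·(1-q_ph)). -/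
/-!
Since the two outcomes of Alice's coin in the Z-basis are equiprobable, summing the X- and Z-basis
constraints gives `∑ p_j = 1`, so `1 - 2Δ = ∑ p_j (1 - 2α_j)`. The complementarity bound reads
`(1 - 2α_j)² ≤ 4β_j(1 - β_j)`, so each summand is at most the geometric mean
`√(2p_j(1 - β_j) · 2p_jβ_j)` of the corresponding X- and Z-basis probabilities.
-/

lemma sq_one_sub_two_mul_le_of_complementarity {a b : ℝ}
    (h : (1 - 2 * a) ^ 2 + (1 - 2 * b) ^ 2 ≤ 1) :
    (1 - 2 * a) ^ 2 ≤ 2 * (1 - b) * (2 * b) := by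
  nlinarith

lemma mul_one_sub_two_mul_le_sqrt {p a b : ℝ}
    (h : (1 - 2 * a) ^ 2 + (1 - 2 * b) ^ 2 ≤ 1) :
    p * (1 - 2 * a) ≤ Real.sqrt (2 * p * (1 - b) * (2 * p * b)) := by
  have hsq : (p * (1 - 2 * a)) ^ 2 ≤ 2 * p * (1 - b) * (2 * p * b) := by
    have := mul_le_mul_of_nonneg_left (sq_one_sub_two_mul_le_of_complementarity h) (sq_nonneg p)
    linear_combination this
  exact (le_abs_self _).trans (Real.abs_le_sqrt hsq)

theorem phase_error_bound_general (qX δX qph δph Δ : ℝ)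
    (p α β : Fin 3 → ℝ)
    (hΔ : ∑ j, p j * α j = Δ)
    (hcompl : ∀ j, (1 - 2 * α j) ^ 2 + (1 - 2 * β j) ^ 2 ≤ 1)
    (h0Z : 2 * p 0 * β 0 = qph * (1 - δph))
    (h1Z : 2 * p 1 * β 1 = qph * δph)
    (h2Z : 2 * p 2 * β 2 = 1 - qph)
    (h0X : 2 * p 0 * (1 - β 0) = qX * (1 - δX))
    (h1X : 2 * p 1 * (1 - β 1) = qX * δX)
    (h2X : 2 * p 2 * (1 - β 2) = 1 - qX) :
    1 - 2 * Δ ≤ Real.sqrt (qX * (1 - δX) * (qph * (1 - δph)))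
      + Real.sqrt (qX * δX * (qph * δph))
      + Real.sqrt ((1 - qX) * (1 - qph)) := by
  rw [Fin.sum_univ_three] at hΔ
  have hsum : p 0 + p 1 + p 2 = 1 := by
    linear_combination (h0Z + h1Z + h2Z + h0X + h1X + h2X) / 2
  have hbias : 1 - 2 * Δ = p 0 * (1 - 2 * α 0) + p 1 * (1 - 2 * α 1) + p 2 * (1 - 2 * α 2) := by
    linear_combination 2 * hΔ - hsum
  have hterm0 := mul_one_sub_two_mul_le_sqrt (p := p 0) (hcompl 0)
  have hterm1 := mul_one_sub_two_mul_le_sqrt (p := p 1) (hcompl 1)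
  have hterm2 := mul_one_sub_two_mul_le_sqrt (p := p 2) (hcompl 2)
  rw [h0X, h0Z] at hterm0
  rw [h1X, h1Z] at hterm1
  rw [h2X, h2Z] at hterm2
  linarith

theorem phase_error_bound (qX δX qph δph Δ : ℝ)
    (hqX0 : 0 ≤ qX) (hqX1 : qX ≤ 1) (hδX0 : 0 ≤ δX) (hδX1 : δX ≤ 1)
    (hqph0 : 0 ≤ qph) (hqph1 : qph ≤ 1) (hδph0 : 0 ≤ δph) (hδph1 : δph ≤ 1)
    (p α β : Fin 3 → ℝ)
    (hp : ∀ j, 0 ≤ p j)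
    (hα0 : ∀ j, 0 ≤ α j) (hα1 : ∀ j, α j ≤ 1)
    (hβ0 : ∀ j, 0 ≤ β j) (hβ1 : ∀ j, β j ≤ 1)
    (hΔ : ∑ j, p j * α j = Δ)
    (hcompl : ∀ j, (1 - 2 * α j) ^ 2 + (1 - 2 * β j) ^ 2 ≤ 1)
    (h0Z : 2 * p 0 * β 0 = qph * (1 - δph))
    (h1Z : 2 * p 1 * β 1 = qph * δph)
    (h2Z : 2 * p 2 * β 2 = 1 - qph)
    (h0X : 2 * p 0 * (1 - β 0) = qX * (1 - δX))
    (h1X : 2 * p 1 * (1 - β 1) = qX * δX)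
    (h2X : 2 * p 2 * (1 - β 2) = 1 - qX) :
    1 - 2 * Δ ≤ Real.sqrt (qX * (1 - δX) * (qph * (1 - δph)))
      + Real.sqrt (qX * δX * (qph * δph))
      + Real.sqrt ((1 - qX) * (1 - qph)) :=
  phase_error_bound_general qX δX qph δph Δ p α β hΔ hcompl h0Z h1Z h2Z h0X h1X h2X
end

section
/- Let n ≥ 1, let E be an n×n complex positive semidefinite matrix with I - E also positive semidefinite, and let Q be a nonzero subspace of ℂⁿ (with the standard inner product). Let λ = inf{⟨Φ, EΦ⟩ : Φ ∈ Q, ‖Φ‖ = 1}, and let √E denote the unique positive semidefinite square root of E. Then there exists a linear map R : ℂⁿ → ℂⁿ with operator norm ‖R‖ ≤ 1 such that R(√E · Φ) = √λ · Φ for every Φ ∈ Q. -/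
/-!
Since `√E` is Hermitian with square `E`, `re ⟨Φ, EΦ⟩ = ‖√E Φ‖²`, so the definition of `λ` gives
`√λ ‖Φ‖ ≤ ‖√E Φ‖` on `Q`. For `λ > 0` this makes `√E` injective on `Q`, and `√E Φ ↦ √λ Φ` is a
contraction on `√E(Q)`; precomposing it with the orthogonal projection onto `√E(Q)` gives `R`.
-/

open scoped ComplexOrder

noncomputable def Matrix.PosSemidef.sqrt {n : Type*} [Fintype n] [DecidableEq n]
    {A : Matrix n n ℂ} (hA : A.PosSemidef) : Matrix n n ℂ :=
  (hA.1.eigenvectorUnitary : Matrix n n ℂ) *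
    Matrix.diagonal (fun i => ((√(hA.1.eigenvalues i) : ℝ) : ℂ)) *
    (star hA.1.eigenvectorUnitary : Matrix n n ℂ)

theorem LinearMap.sqrt_sInf_norm_sq_mul_norm_le {𝕜 E F : Type*} [RCLike 𝕜]
    [NormedAddCommGroup E] [NormedSpace 𝕜 E] [NormedAddCommGroup F] [NormedSpace 𝕜 F]
    {T : E →ₗ[𝕜] F} {Q : Submodule 𝕜 E} {x : E} (hx : x ∈ Q) :
    √(sInf {r : ℝ | ∃ y ∈ Q, ‖y‖ = 1 ∧ ‖T y‖ ^ 2 = r}) * ‖x‖ ≤ ‖T x‖ := by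
  rcases eq_or_ne x 0 with rfl | hx0
  · simp
  have hpos : 0 < ‖x‖ := norm_pos_iff.mpr hx0
  have hunit : ‖((‖x‖⁻¹ : ℝ) : 𝕜) • x‖ = 1 := by
    rw [norm_smul, RCLike.norm_ofReal, abs_inv, abs_norm, inv_mul_cancel₀ hpos.ne']
  have hle : sInf {r : ℝ | ∃ y ∈ Q, ‖y‖ = 1 ∧ ‖T y‖ ^ 2 = r} ≤ (‖T x‖ / ‖x‖) ^ 2 := by
    refine csInf_le ⟨0, ?_⟩ ⟨_, Q.smul_mem _ hx, hunit, ?_⟩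
    · rintro r ⟨y, -, -, rfl⟩
      positivity
    · rw [map_smul, norm_smul, RCLike.norm_ofReal, abs_inv, abs_norm, inv_mul_eq_div]
  rw [← le_div_iff₀ hpos]
  simpa only [Real.sqrt_sq (by positivity : 0 ≤ ‖T x‖ / ‖x‖)] using Real.sqrt_le_sqrt hle

theorem LinearMap.exists_norm_le_one_apply_map_eq_smul {𝕜 E F : Type*} [RCLike 𝕜]
    [NormedAddCommGroup E] [NormedSpace 𝕜 E] [NormedAddCommGroup F] [InnerProductSpace 𝕜 F]
    [FiniteDimensional 𝕜 F] {T : E →ₗ[𝕜] F} {Q : Submodule 𝕜 E}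
    {c : ℝ} (hc : 0 ≤ c) (hT : ∀ x ∈ Q, c * ‖x‖ ≤ ‖T x‖) :
    ∃ R : F →L[𝕜] E, ‖R‖ ≤ 1 ∧ ∀ x ∈ Q, R (T x) = (c : 𝕜) • x := by
  rcases hc.eq_or_lt with rfl | hc
  · exact ⟨0, by simp, by simp⟩
  have hinj : Function.Injective (T ∘ₗ Q.subtype) := by
    refine (injective_iff_map_eq_zero _).mpr fun x hx => ?_
    have hTx : T x = 0 := by simpa using hx
    have h := hT x x.2
    rw [hTx, norm_zero] at h
    exact Subtype.ext (norm_le_zero_iff.mp (nonpos_of_mul_nonpos_right h hc))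
  set W := LinearMap.range (T ∘ₗ Q.subtype)
  let e : Q ≃ₗ[𝕜] W := LinearEquiv.ofInjective _ hinj
  let R : F →ₗ[𝕜] E :=
    (c : 𝕜) • (Q.subtype ∘ₗ e.symm.toLinearMap ∘ₗ W.orthogonalProjectionOnto.toLinearMap)
  have hR : ∀ x, ‖R x‖ ≤ 1 * ‖x‖ := fun x => calc
    ‖R x‖ = c * ‖(e.symm (W.orthogonalProjectionOnto x) : E)‖ := by
      simp [R, norm_smul, hc.le]
    _ ≤ ‖T (e.symm (W.orthogonalProjectionOnto x))‖ := hT _ (Submodule.coe_mem _)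
    _ = ‖W.orthogonalProjectionOnto x‖ := congrArg (fun w : W => ‖(w : F)‖) (e.apply_symm_apply _)
    _ ≤ 1 * ‖x‖ := W.orthogonalProjectionOnto.le_of_opNorm_le W.orthogonalProjectionOnto_norm_le x
  refine ⟨R.mkContinuous 1 hR, LinearMap.mkContinuous_norm_le _ zero_le_one _, fun x hx => ?_⟩
  have hproj : e.symm (W.orthogonalProjectionOnto (T x)) = ⟨x, hx⟩ := by
    rw [show T x = ((e ⟨x, hx⟩ : W) : F) from rfl, W.orthogonalProjectionOnto_mem_subspace_eq_self,
      e.symm_apply_apply]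
  simp [R, hproj]

namespace Matrix.PosSemidef

variable {n : Type*} [Fintype n] [DecidableEq n] {A : Matrix n n ℂ} (hA : A.PosSemidef)

theorem sqrt_eq_conjStarAlgAut : hA.sqrt = Unitary.conjStarAlgAut ℂ _ hA.1.eigenvectorUnitary
    (diagonal fun i => ((√(hA.1.eigenvalues i) : ℝ) : ℂ)) := rfl

theorem sqrt_isHermitian : hA.sqrt.IsHermitian := by
  rw [sqrt_eq_conjStarAlgAut]
  have hD : IsSelfAdjoint (diagonal fun i => ((√(hA.1.eigenvalues i) : ℝ) : ℂ)) :=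
    isHermitian_diagonal_of_self_adjoint _ (by ext; simp)
  exact hD.map _

theorem sqrt_mul_self : hA.sqrt * hA.sqrt = A := by
  conv_rhs => rw [hA.1.spectral_theorem]
  rw [sqrt_eq_conjStarAlgAut, ← map_mul, diagonal_mul_diagonal]
  congr 2
  ext i
  simp [← Complex.ofReal_mul, Real.mul_self_sqrt (hA.eigenvalues_nonneg i)]

theorem re_inner_toEuclideanLin_self (x : EuclideanSpace ℂ n) :
    (inner ℂ x (toEuclideanLin A x)).re = ‖toEuclideanLin hA.sqrt x‖ ^ 2 := by
  have hS : (toEuclideanLin hA.sqrt).IsSymmetric :=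
    isSymmetric_toEuclideanLin_iff.mpr hA.sqrt_isHermitian
  have hsq : toEuclideanLin A x = toEuclideanLin hA.sqrt (toEuclideanLin hA.sqrt x) := by
    rw [← LinearMap.comp_apply, ← toLpLin_mul_same, hA.sqrt_mul_self]
  rw [hsq, ← hS]
  exact inner_self_eq_norm_sq (𝕜 := ℂ) _

end Matrix.PosSemidef

theorem koashi_ueda_reversal_exists_general (n : ℕ)
    (E : Matrix (Fin n) (Fin n) ℂ) (hE : E.PosSemidef)
    (Q : Submodule ℂ (EuclideanSpace ℂ (Fin n)))
    (lam : ℝ)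
    (hlam : lam = sInf {r : ℝ | ∃ Φ ∈ Q, ‖Φ‖ = 1 ∧
      ((inner ℂ Φ (Matrix.toEuclideanLin E Φ) : ℂ)).re = r}) :
    ∃ R : EuclideanSpace ℂ (Fin n) →L[ℂ] EuclideanSpace ℂ (Fin n),
      ‖R‖ ≤ 1 ∧ ∀ Φ ∈ Q, R (Matrix.toEuclideanLin hE.sqrt Φ) = (Real.sqrt lam : ℂ) • Φ := by
  simp only [hE.re_inner_toEuclideanLin_self] at hlam
  subst hlam
  exact LinearMap.exists_norm_le_one_apply_map_eq_smul (Real.sqrt_nonneg _)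
    fun _ hΦ => LinearMap.sqrt_sInf_norm_sq_mul_norm_le hΦ

/-- Koashi–Ueda measurement reversal (existence part): for a POVM element
`0 ≤ E ≤ I` with state change `Φ ↦ √E·Φ`, there is a contraction `R` reversing
the measurement on the subspace `Q` with joint success probability
`λ = inf {⟨Φ, EΦ⟩ : Φ ∈ Q, ‖Φ‖ = 1}`. -/
theorem koashi_ueda_reversal_exists (n : ℕ) (hn : 1 ≤ n)
    (E : Matrix (Fin n) (Fin n) ℂ) (hE : E.PosSemidef) (hIE : (1 - E).PosSemidef)
    (Q : Submodule ℂ (EuclideanSpace ℂ (Fin n))) (hQ : Q ≠ ⊥)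
    (lam : ℝ)
    (hlam : lam = sInf {r : ℝ | ∃ Φ ∈ Q, ‖Φ‖ = 1 ∧
      ((inner ℂ Φ (Matrix.toEuclideanLin E Φ) : ℂ)).re = r}) :
    ∃ R : EuclideanSpace ℂ (Fin n) →L[ℂ] EuclideanSpace ℂ (Fin n),
      ‖R‖ ≤ 1 ∧ ∀ Φ ∈ Q, R (Matrix.toEuclideanLin hE.sqrt Φ) = (Real.sqrt lam : ℂ) • Φ :=
  koashi_ueda_reversal_exists_general n E hE Q lam hlam
end

section
/- Let n ≥ 1, let E be an n×n complex positive semidefinite matrix with I - E also positive semidefinite, let Q be a nonzero subspace of ℂⁿ (with the standard inner product), and let λ = inf{⟨Φ, EΦ⟩ : Φ ∈ Q, ‖Φ‖ = 1}. If R : ℂⁿ → ℂⁿ is a linear map with operator norm ‖R‖ ≤ 1 and c ∈ ℂ is such that R(√E · Φ) = c · Φ for every Φ ∈ Q, then |c|² ≤ λ. -/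
/-!
For a unit vector `Φ ∈ Q`, `|c| = ‖R (√E Φ)‖ ≤ ‖√E Φ‖`, and since `√E` is self-adjoint with square
`E`, `‖√E Φ‖² = ⟨Φ, E Φ⟩`. Taking the infimum over such `Φ` gives `|c|² ≤ λ`.
-/

open scoped ComplexOrder

lemma norm_le_norm_of_apply_eq_smul {𝕜 F G : Type*} [NontriviallyNormedField 𝕜]
    [SeminormedAddCommGroup F] [NormedSpace 𝕜 F] [SeminormedAddCommGroup G] [NormedSpace 𝕜 G]
    {R : F →L[𝕜] G} (hR : ‖R‖ ≤ 1) {y : F} {x : G} (hx : ‖x‖ = 1) {c : 𝕜}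
    (h : R y = c • x) : ‖c‖ ≤ ‖y‖ :=
  calc ‖c‖ = ‖R y‖ := by rw [h, norm_smul, hx, mul_one]
    _ ≤ ‖y‖ := (R.le_of_opNorm_le hR y).trans_eq (one_mul _)

lemma Submodule.exists_norm_eq_one {𝕜 H : Type*} [RCLike 𝕜] [NormedAddCommGroup H]
    [NormedSpace 𝕜 H] {Q : Submodule 𝕜 H} (hQ : Q ≠ ⊥) : ∃ x ∈ Q, ‖x‖ = 1 := by
  obtain ⟨x, hxQ, hx⟩ := Submodule.exists_mem_ne_zero_of_ne_bot hQ
  exact ⟨(‖x‖⁻¹ : 𝕜) • x, Q.smul_mem _ hxQ, norm_smul_inv_norm hx⟩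

namespace Matrix
variable {n 𝕜 : Type*} [Fintype n] [DecidableEq n] [RCLike 𝕜]

lemma PosSemidef.cfc_sqrt_mul_self {E : Matrix n n 𝕜} (hE : E.PosSemidef) :
    hE.1.cfc Real.sqrt * hE.1.cfc Real.sqrt = E := by
  have hE_sa : IsSelfAdjoint E := hE.1
  rw [← hE.1.cfc_eq, ← cfc_mul ..]
  conv_rhs => rw [← cfc_id' ℝ E]
  refine cfc_congr fun x hx ↦ Real.mul_self_sqrt ?_
  obtain ⟨i, rfl⟩ := hE.1.spectrum_real_eq_range_eigenvalues ▸ hx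
  exact hE.eigenvalues_nonneg i

lemma IsHermitian.isHermitian_cfc {E : Matrix n n 𝕜} (hE : E.IsHermitian) (f : ℝ → ℝ) :
    (hE.cfc f).IsHermitian :=
  hE.cfc_eq f ▸ cfc_predicate f E

lemma PosSemidef.norm_sq_toEuclideanLin_cfc_sqrt {E : Matrix n n 𝕜} (hE : E.PosSemidef)
    (x : EuclideanSpace 𝕜 n) :
    ‖toEuclideanLin (hE.1.cfc Real.sqrt) x‖ ^ 2 = RCLike.re (inner 𝕜 x (toEuclideanLin E x)) := by
  change ‖toEuclideanCLM (n := n) (𝕜 := 𝕜) (hE.1.cfc Real.sqrt) x‖ ^ 2 =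
    RCLike.re (inner 𝕜 x (toEuclideanCLM (n := n) (𝕜 := 𝕜) E x))
  rw [ContinuousLinearMap.apply_norm_sq_eq_inner_adjoint_right,
    ← ContinuousLinearMap.star_eq_adjoint, ← map_star, (hE.1.isHermitian_cfc Real.sqrt).star_eq, ← ContinuousLinearMap.mul_def,
    ← map_mul, hE.cfc_sqrt_mul_self]

end Matrix

theorem koashi_ueda_reversal_optimal_general (n : ℕ)
    (E : Matrix (Fin n) (Fin n) ℂ) (hE : E.PosSemidef)
    (Q : Submodule ℂ (EuclideanSpace ℂ (Fin n))) (hQ : Q ≠ ⊥)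
    (lam : ℝ)
    (hlam : lam = sInf {r : ℝ | ∃ Φ ∈ Q, ‖Φ‖ = 1 ∧
      ((inner ℂ Φ (Matrix.toEuclideanLin E Φ) : ℂ)).re = r})
    (R : EuclideanSpace ℂ (Fin n) →L[ℂ] EuclideanSpace ℂ (Fin n)) (hR : ‖R‖ ≤ 1)
    (c : ℂ) (hc : ∀ Φ ∈ Q, R (Matrix.toEuclideanLin
      ((hE.1.eigenvectorUnitary : Matrix (Fin n) (Fin n) ℂ) *
        Matrix.diagonal ((↑) ∘ Real.sqrt ∘ hE.1.eigenvalues) *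
        (star hE.1.eigenvectorUnitary : Matrix (Fin n) (Fin n) ℂ)) Φ) = c • Φ) :
    ‖c‖ ^ 2 ≤ lam := by
  obtain ⟨Φ₀, hΦ₀Q, hΦ₀⟩ := Submodule.exists_norm_eq_one hQ
  rw [hlam]
  refine le_csInf ⟨_, Φ₀, hΦ₀Q, hΦ₀, rfl⟩ ?_
  rintro _ ⟨Φ, hΦQ, hΦ, rfl⟩
  -- the matrix in `hc` is `hE.1.cfc Real.sqrt` by definition
  calc ‖c‖ ^ 2 ≤ ‖Matrix.toEuclideanLin (hE.1.cfc Real.sqrt) Φ‖ ^ 2 :=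
        pow_le_pow_left₀ (norm_nonneg c) (norm_le_norm_of_apply_eq_smul hR hΦ (hc Φ hΦQ)) 2
    _ = _ := hE.norm_sq_toEuclideanLin_cfc_sqrt Φ

/-- Koashi–Ueda measurement reversal (optimality part): no contraction `R`
reversing the measurement `Φ ↦ √E·Φ` on the subspace `Q` can succeed with joint
probability `|c|²` exceeding `λ = inf {⟨Φ, EΦ⟩ : Φ ∈ Q, ‖Φ‖ = 1}`. -/
theorem koashi_ueda_reversal_optimal (n : ℕ) (hn : 1 ≤ n)
    (E : Matrix (Fin n) (Fin n) ℂ) (hE : E.PosSemidef) (hIE : (1 - E).PosSemidef)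
    (Q : Submodule ℂ (EuclideanSpace ℂ (Fin n))) (hQ : Q ≠ ⊥)
    (lam : ℝ)
    (hlam : lam = sInf {r : ℝ | ∃ Φ ∈ Q, ‖Φ‖ = 1 ∧
      ((inner ℂ Φ (Matrix.toEuclideanLin E Φ) : ℂ)).re = r})
    (R : EuclideanSpace ℂ (Fin n) →L[ℂ] EuclideanSpace ℂ (Fin n)) (hR : ‖R‖ ≤ 1)
    (c : ℂ) (hc : ∀ Φ ∈ Q, R (Matrix.toEuclideanLin
      ((hE.1.eigenvectorUnitary : Matrix (Fin n) (Fin n) ℂ) *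
        Matrix.diagonal ((↑) ∘ Real.sqrt ∘ hE.1.eigenvalues) *
        (star hE.1.eigenvectorUnitary : Matrix (Fin n) (Fin n) ℂ)) Φ) = c • Φ) :
    ‖c‖ ^ 2 ≤ lam :=
  koashi_ueda_reversal_optimal_general n E hE Q hQ lam hlam R hR c hc
end
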